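/- Pointwise decay of half-line oscillator eigenfunctions away from the turning region: for each n and s there is a constant C_{n,s} such that if |x - η| ≥ ε(x + |η|) (x in the domain, away from the classically allowed annulus), then the normalized eigenfunction satisfies |u_n(x, η)| ≤ C_{n,s}(1 + x + |η|)^{-s}. -/

import Mathlib

open MeasureTheory Set Filter Topology Real

/-- `u` is an L²-normalized eigenfunction of the fibered operator
`L(η) = -d²/dx² + (η - x)²` on `ℝ⁺` with eigenvalue `lam`. -/
def IsFiberEigenfun (η lam : ℝ) (u : ℝ → ℝ) : Prop :=
  ContDiff ℝ 2 u ∧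
  (∀ x : ℝ, 0 ≤ x → -(deriv (deriv u)) x + (η - x) ^ 2 * u x = lam * u x) ∧
  Integrable (fun x => (u x) ^ 2) (volume.restrict (Ioi 0)) ∧
  ∫ x in Ioi (0 : ℝ), (u x) ^ 2 = 1

/-- `lam` is an eigenvalue of `L(η)` on `ℝ⁺` with Dirichlet condition at `0`. -/
def IsFiberDirEV (η lam : ℝ) : Prop := ∃ u, IsFiberEigenfun η lam u ∧ u 0 = 0

/-- `lam` is an eigenvalue of `L(η)` on `ℝ⁺` with Neumann condition at `0`. -/
def IsFiberNeuEV (η lam : ℝ) : Prop := ∃ u, IsFiberEigenfun η lam u ∧ deriv u 0 = 0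

/-- `lam` enumerates, in strictly increasing order, all values satisfying `P`. -/
def EnumeratesEV (P : ℝ → Prop) (lam : ℕ → ℝ) : Prop :=
  StrictMono lam ∧ (∀ n, P (lam n)) ∧ ∀ t, P t → ∃ n, lam n = t

/-!
Where `(η - t)² ≥ λ + d²` (the classically forbidden region) the square of the eigenfunction
satisfies `(v²)'' ≥ 2 d² v²`, so a maximum principle bounds `v²` there by combinations of
`e^{± d t}`. Fed with the uniform bound `v² ≤ λ⁺ + 2` coming from the energy identity, this gives
`v(x)² ≤ A e^{-|x - η|}` with `A` depending only on an upper bound for `λ`; when `η` is very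
negative the whole half-line would be forbidden, which is impossible for an L²-normalized `v`.
Away from the turning region `|x - η| ≥ ε (x + |η|)`, and exponential decay beats every power.
-/

theorem lt_of_deriv_nonneg_of_second_deriv_pos {f f' f'' : ℝ → ℝ} {a b : ℝ} (hab : a < b)
    (hf : ∀ t ∈ Icc a b, HasDerivAt f (f' t) t) (hf' : ∀ t ∈ Icc a b, HasDerivAt f' (f'' t) t)
    (hf''_pos : ∀ t ∈ Icc a b, 0 < f'' t) (hf'_nonneg : 0 ≤ f' a) : f a < f b := by
  have hf'_mono : StrictMonoOn f' (Icc a b) := by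
    refine strictMonoOn_of_deriv_pos (convex_Icc a b)
      (fun t ht => (hf' t ht).continuousAt.continuousWithinAt) fun t ht => ?_
    rw [interior_Icc] at ht
    rw [(hf' t (Ioo_subset_Icc_self ht)).deriv]
    exact hf''_pos t (Ioo_subset_Icc_self ht)
  refine strictMonoOn_of_deriv_pos (convex_Icc a b)
    (fun t ht => (hf t ht).continuousAt.continuousWithinAt) (fun t ht => ?_)
    (left_mem_Icc.2 hab.le) (right_mem_Icc.2 hab.le) hab
  rw [interior_Icc] at ht
  rw [(hf t (Ioo_subset_Icc_self ht)).deriv]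
  exact hf'_nonneg.trans_lt
    (hf'_mono (left_mem_Icc.2 hab.le) (Ioo_subset_Icc_self ht) ht.1)

theorem nonpos_of_second_deriv_pos_of_pos {f f' f'' : ℝ → ℝ} {l r : ℝ}
    (hf : ∀ t ∈ Icc l r, HasDerivAt f (f' t) t) (hf' : ∀ t ∈ Icc l r, HasDerivAt f' (f'' t) t)
    (hconv : ∀ t ∈ Icc l r, 0 < f t → 0 < f'' t)
    (hr : f r ≤ 0) (hl : f l ≤ 0 ∨ 0 ≤ f' l) : ∀ t ∈ Icc l r, f t ≤ 0 := by
  intro t₀ ht₀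
  by_contra! hpos
  obtain ⟨m, hm, hmax⟩ := isCompact_Icc.exists_isMaxOn ⟨t₀, ht₀⟩
    fun t ht => (hf t ht).continuousAt.continuousWithinAt
  have hfm : 0 < f m := hpos.trans_le (hmax ht₀)
  have hmr : m < r := lt_of_le_of_ne hm.2 (by rintro rfl; linarith)
  have hf'm : 0 ≤ f' m := by
    rcases hm.1.eq_or_lt with rfl | hlm
    · exact hl.resolve_left (by linarith)
    · have : IsLocalMax f m := hmax.isLocalMax (Icc_mem_nhds hlm hmr)
      exact (this.hasDerivAt_eq_zero (hf m hm)).ge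
  obtain ⟨δ, hδ, hball⟩ := Metric.eventually_nhds_iff.1
    ((hf m hm).continuousAt.eventually (lt_mem_nhds hfm))
  set b := min (m + δ / 2) r
  have hmb : m < b := lt_min (by linarith) hmr
  have hsub : Icc m b ⊆ Icc l r := Icc_subset_Icc hm.1 (min_le_right _ _)
  have hpos_near : ∀ t ∈ Icc m b, 0 < f t := fun t ht => hball <| by
    rw [dist_eq, abs_of_nonneg (by linarith [ht.1])]
    linarith [ht.2, min_le_left (m + δ / 2) r]
  have := lt_of_deriv_nonneg_of_second_deriv_pos hmb (fun t ht => hf t (hsub ht))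
    (fun t ht => hf' t (hsub ht)) (fun t ht => hconv t (hsub ht) (hpos_near t ht)) hf'm
  exact (hmax (hsub (right_mem_Icc.2 hmb.le))).not_gt this

theorem exists_exp_neg_mul_le_mul_one_add_rpow_neg {δ : ℝ} (hδ : 0 < δ) (s : ℝ) :
    ∃ K, ∀ R, 0 ≤ R → exp (-(δ * R)) ≤ K * (1 + R) ^ (-s) := by
  set p := max s 1
  have hp : 0 < p := lt_max_of_lt_right one_pos
  set c := δ / p
  have hc : 0 < c := div_pos hδ hp
  refine ⟨exp δ / c ^ p, fun R hR => ?_⟩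
  have hR1 : 0 < 1 + R := by linarith
  -- `y ≤ exp y` at `y = c (1 + R)`, raised to the power `p`
  have hpow : c ^ p * (1 + R) ^ p ≤ exp (δ * (1 + R)) := by
    have hy : c * (1 + R) ≤ exp (c * (1 + R)) := by linarith [add_one_le_exp (c * (1 + R))]
    have := rpow_le_rpow (by positivity) hy hp.le
    rwa [mul_rpow hc.le hR1.le, ← exp_mul,
      show c * (1 + R) * p = δ * (1 + R) by simp only [c]; field_simp] at this
  calc exp (-(δ * R)) = exp δ / exp (δ * (1 + R)) := by rw [← exp_sub]; ring_nf
    _ ≤ exp δ / (c ^ p * (1 + R) ^ p) := by gcongr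
    _ = exp δ / c ^ p * (1 + R) ^ (-p) := by rw [rpow_neg hR1.le]; field_simp
    _ ≤ exp δ / c ^ p * (1 + R) ^ (-s) := by
      gcongr
      · linarith
      · exact le_max_left s 1

theorem add_sq_le_sq_of_add_le_abs {lam c d y : ℝ} (hlam : lam ≤ c ^ 2) (hc : 0 ≤ c)
    (hd : 0 ≤ d) (h : c + d ≤ |y|) : lam + d ^ 2 ≤ y ^ 2 := by
  rw [← sq_abs y]
  nlinarith

theorem hasDerivAt_exp_mul (d t : ℝ) : HasDerivAt (fun s => exp (d * s)) (d * exp (d * t)) t := by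
  simpa [mul_comm] using ((hasDerivAt_id t).const_mul d).exp

namespace IsFiberEigenfun

variable {η lam : ℝ} {v : ℝ → ℝ}

theorem differentiable (hv : IsFiberEigenfun η lam v) : Differentiable ℝ v :=
  hv.1.differentiable (by norm_num)

theorem differentiable_deriv (hv : IsFiberEigenfun η lam v) : Differentiable ℝ (deriv v) :=
  ((contDiff_succ_iff_deriv (n := 1)).1 hv.1).2.2.differentiable one_ne_zero

theorem deriv_deriv_eq (hv : IsFiberEigenfun η lam v) {t : ℝ} (ht : 0 ≤ t) :
    deriv (deriv v) t = ((η - t) ^ 2 - lam) * v t := by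
  linear_combination -hv.2.1 t ht

theorem hasDerivAt_sq (hv : IsFiberEigenfun η lam v) (t : ℝ) :
    HasDerivAt (fun s => v s ^ 2) (2 * v t * deriv v t) t := by
  simpa [mul_comm] using (hv.differentiable t).hasDerivAt.fun_pow 2

theorem hasDerivAt_mul_deriv (hv : IsFiberEigenfun η lam v) {t : ℝ} (ht : 0 ≤ t) :
    HasDerivAt (fun s => v s * deriv v s) (deriv v t ^ 2 + ((η - t) ^ 2 - lam) * v t ^ 2) t := by
  refine ((hv.differentiable t).hasDerivAt.fun_mul
    (hv.differentiable_deriv t).hasDerivAt).congr_deriv ?_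
  rw [hv.deriv_deriv_eq ht]
  ring

theorem intervalIntegral_sq_le_one (hv : IsFiberEigenfun η lam v) {a : ℝ} (ha : 0 ≤ a)
    (b : ℝ) : ∫ t in a..b, v t ^ 2 ≤ 1 := by
  rcases le_total a b with hab | hba
  · rw [intervalIntegral.integral_of_le hab, ← hv.2.2.2]
    exact setIntegral_mono_set hv.2.2.1 (ae_of_all _ fun t => sq_nonneg (v t))
      (Ioc_subset_Ioi_self.trans (Ioi_subset_Ioi ha)).eventuallyLE
  · rw [intervalIntegral.integral_of_ge hba, neg_le]
    exact le_trans (by norm_num) (setIntegral_nonneg measurableSet_Ioc fun t _ => sq_nonneg (v t))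

theorem integral_deriv_sq_le (hv : IsFiberEigenfun η lam v) (hbc : v 0 * deriv v 0 = 0)
    {T : ℝ} (hT : 0 ≤ T) : ∫ t in (0 : ℝ)..T, deriv v t ^ 2 ≤ v T * deriv v T + max lam 0 := by
  have hv_cont := hv.differentiable.continuous
  have hdv_cont := hv.differentiable_deriv.continuous
  have hparts : ∫ t in (0 : ℝ)..T, (deriv v t ^ 2 + ((η - t) ^ 2 - lam) * v t ^ 2)
      = v T * deriv v T := by
    rw [intervalIntegral.integral_eq_sub_of_hasDerivAt (fun t ht => hv.hasDerivAt_mul_deriv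
      (by rw [uIcc_of_le hT] at ht; exact ht.1))
      (Continuous.intervalIntegrable (by fun_prop) _ _), hbc, sub_zero]
  rw [intervalIntegral.integral_add (Continuous.intervalIntegrable (by fun_prop) _ _)
    (Continuous.intervalIntegrable (by fun_prop) _ _)] at hparts
  have hpot :
      ∫ t in (0 : ℝ)..T, -lam * v t ^ 2 ≤ ∫ t in (0 : ℝ)..T, ((η - t) ^ 2 - lam) * v t ^ 2 :=
    intervalIntegral.integral_mono_on hT (Continuous.intervalIntegrable (by fun_prop) _ _)
      (Continuous.intervalIntegrable (by fun_prop) _ _) fun t _ => by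
      nlinarith [sq_nonneg (η - t), sq_nonneg (v t)]
  rw [intervalIntegral.integral_const_mul] at hpot
  have hI₀ : 0 ≤ ∫ t in (0 : ℝ)..T, v t ^ 2 :=
    intervalIntegral.integral_nonneg hT fun t _ => sq_nonneg (v t)
  have hI₁ := hv.intervalIntegral_sq_le_one le_rfl T
  nlinarith [le_max_left lam 0, le_max_right lam 0]

theorem mul_deriv_nonpos (hv : IsFiberEigenfun η lam v) {x₁ : ℝ} (hx₁ : 0 ≤ x₁)
    (hforb : ∀ t, x₁ ≤ t → lam ≤ (η - t) ^ 2) {t₀ : ℝ} (ht₀ : x₁ ≤ t₀) :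
    v t₀ * deriv v t₀ ≤ 0 := by
  have hv_cont := hv.differentiable.continuous
  have hdv_cont := hv.differentiable_deriv.continuous
  -- otherwise `v v'` is increasing and positive beyond `t₀`, and `v ^ 2` grows linearly
  by_contra! hpos
  have hmono : MonotoneOn (fun t => v t * deriv v t) (Ici x₁) := by
    refine monotoneOn_of_deriv_nonneg (convex_Ici x₁) (by fun_prop)
      (fun t ht => (hv.hasDerivAt_mul_deriv (hx₁.trans (interior_subset ht))).differentiableAt
        |>.differentiableWithinAt) fun t ht => ?_
    rw [interior_Ici] at ht
    rw [(hv.hasDerivAt_mul_deriv (hx₁.trans ht.le)).deriv]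
    nlinarith [hforb t ht.le, sq_nonneg (deriv v t), sq_nonneg (v t)]
  set m := 2 * (v t₀ * deriv v t₀)
  have hm : 0 < m := by positivity
  have hderiv : ∀ t, HasDerivAt (fun t => v t ^ 2 - m * t) (2 * v t * deriv v t - m) t :=
    fun t => by simpa using (hv.hasDerivAt_sq t).fun_sub ((hasDerivAt_id t).const_mul m)
  have hgrow : MonotoneOn (fun t => v t ^ 2 - m * t) (Ici t₀) := by
    refine monotoneOn_of_deriv_nonneg (convex_Ici t₀) (by fun_prop)
      (fun t _ => (hderiv t).differentiableAt.differentiableWithinAt) fun t ht => ?_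
    rw [interior_Ici] at ht
    rw [(hderiv t).deriv]
    have := hmono (mem_Ici.2 ht₀) (mem_Ici.2 (ht₀.trans ht.le)) ht.le
    simp only at this
    linarith
  set a := t₀ + 1 / m
  have hone : ∀ t ∈ Icc a (a + 2), 1 ≤ v t ^ 2 := fun t ht => by
    have hta : t₀ ≤ t := by linarith [ht.1, one_div_pos.2 hm]
    have := hgrow (mem_Ici.2 le_rfl) (mem_Ici.2 hta) hta
    simp only at this
    have : m * (t - t₀) ≥ m * (1 / m) := by gcongr; linarith [ht.1]
    rw [mul_one_div_cancel hm.ne'] at this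
    nlinarith [sq_nonneg (v t₀)]
  have := intervalIntegral.integral_mono_on (μ := volume) (by linarith) intervalIntegrable_const
    (Continuous.intervalIntegrable (by fun_prop) _ _) hone
  rw [intervalIntegral.integral_const, smul_eq_mul] at this
  linarith [hv.intervalIntegral_sq_le_one
    (add_nonneg (hx₁.trans ht₀) (one_div_pos.2 hm).le) (a + 2)]

theorem sq_le_max_add_two (hv : IsFiberEigenfun η lam v) (hbc : v 0 * deriv v 0 = 0) {x : ℝ}
    (hx : 0 ≤ x) : v x ^ 2 ≤ max lam 0 + 2 := by
  have hv_cont := hv.differentiable.continuous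
  have hdv_cont := hv.differentiable_deriv.continuous
  set x₁ := max η 0 + √(max lam 0)
  have hx₁ : 0 ≤ x₁ := by positivity
  have hforb : ∀ t, x₁ ≤ t → lam ≤ (η - t) ^ 2 := fun t ht => by
    simpa using add_sq_le_sq_of_add_le_abs (d := 0) (y := η - t)
      (by rw [sq_sqrt (le_max_right _ _)]; exact le_max_left _ _) (sqrt_nonneg _) le_rfl
      (by rw [abs_sub_comm]; linarith [le_abs_self (t - η), le_max_left η 0])
  set T := max (x + 1) x₁
  have hgrad : ∫ t in (0 : ℝ)..T, deriv v t ^ 2 ≤ max lam 0 := by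
    linarith [hv.integral_deriv_sq_le hbc (hx₁.trans (le_max_right (x + 1) x₁)),
      hv.mul_deriv_nonpos hx₁ hforb (le_max_right (x + 1) x₁)]
  -- `v x ^ 2 ≤ v y ^ 2 + ∫ₓʸ (v ^ 2 + v' ^ 2)`, at the point `y ∈ [x, x + 1]` minimizing `v ^ 2`
  obtain ⟨y, hy, hmin⟩ := isCompact_Icc.exists_isMinOn (nonempty_Icc.2 (by linarith : x ≤ x + 1))
    (by fun_prop : Continuous fun t => v t ^ 2).continuousOn
  have hy_sq : v y ^ 2 ≤ 1 := by
    have := intervalIntegral.integral_mono_on (μ := volume) (by linarith : x ≤ x + 1)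
      intervalIntegrable_const (Continuous.intervalIntegrable (by fun_prop) _ _)
      fun t ht => isMinOn_iff.1 hmin t ht
    rw [intervalIntegral.integral_const, smul_eq_mul] at this
    linarith [hv.intervalIntegral_sq_le_one hx (x + 1)]
  have hFTC : ∫ t in x..y, 2 * v t * deriv v t = v y ^ 2 - v x ^ 2 :=
    intervalIntegral.integral_eq_sub_of_hasDerivAt (fun t _ => hv.hasDerivAt_sq t)
      (Continuous.intervalIntegrable (by fun_prop) _ _)
  have hcross : ∫ t in x..y, -(2 * v t * deriv v t)
      ≤ (∫ t in x..y, v t ^ 2) + ∫ t in x..y, deriv v t ^ 2 := by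
    rw [← intervalIntegral.integral_add (Continuous.intervalIntegrable (by fun_prop) _ _)
      (Continuous.intervalIntegrable (by fun_prop) _ _)]
    exact intervalIntegral.integral_mono_on hy.1 (Continuous.intervalIntegrable (by fun_prop) _ _)
      (Continuous.intervalIntegrable (by fun_prop) _ _) fun t _ => by
        nlinarith [sq_nonneg (v t + deriv v t)]
  have hdv_sq : ∫ t in x..y, deriv v t ^ 2 ≤ ∫ t in (0 : ℝ)..T, deriv v t ^ 2 :=
    intervalIntegral.integral_mono_interval hx hy.1 (hy.2.trans (le_max_left _ _))
      (ae_of_all _ fun t => sq_nonneg _) (Continuous.intervalIntegrable (by fun_prop) _ _)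
  rw [intervalIntegral.integral_neg, hFTC] at hcross
  linarith [hv.intervalIntegral_sq_le_one hx y]

theorem sq_le_of_forbidden (hv : IsFiberEigenfun η lam v) {l r d a b : ℝ} (hl : 0 ≤ l) (hd : 0 < d)
    (hforb : ∀ t ∈ Icc l r, lam + d ^ 2 ≤ (η - t) ^ 2)
    (hr : v r ^ 2 ≤ a * exp (d * r) + b * exp (-d * r))
    (hleft : v l ^ 2 ≤ a * exp (d * l) + b * exp (-d * l) ∨
      d * a * exp (d * l) - d * b * exp (-d * l) ≤ 2 * (v l * deriv v l)) :
    ∀ t ∈ Icc l r, v t ^ 2 ≤ a * exp (d * t) + b * exp (-d * t) := by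
  have hφ : ∀ t, HasDerivAt (fun s => a * exp (d * s) + b * exp (-d * s))
      (d * a * exp (d * t) - d * b * exp (-d * t)) t := fun t =>
    (((hasDerivAt_exp_mul d t).const_mul a).add
      ((hasDerivAt_exp_mul (-d) t).const_mul b)).congr_deriv (by ring)
  have hφ' : ∀ t, HasDerivAt (fun s => d * a * exp (d * s) - d * b * exp (-d * s))
      (d ^ 2 * (a * exp (d * t) + b * exp (-d * t))) t := fun t =>
    (((hasDerivAt_exp_mul d t).const_mul (d * a)).sub
      ((hasDerivAt_exp_mul (-d) t).const_mul (d * b))).congr_deriv (by ring)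
  intro t ht
  -- `(v ^ 2)'' ≥ 2 d² v ^ 2` while `φ'' = d² φ`, so `v ^ 2 - φ` is convex where it is positive
  have := nonpos_of_second_deriv_pos_of_pos
    (f := fun t => v t ^ 2 - (a * exp (d * t) + b * exp (-d * t)))
    (f' := fun t => 2 * (v t * deriv v t) - (d * a * exp (d * t) - d * b * exp (-d * t)))
    (f'' := fun t => 2 * (deriv v t ^ 2 + ((η - t) ^ 2 - lam) * v t ^ 2)
      - d ^ 2 * (a * exp (d * t) + b * exp (-d * t)))
    (fun t _ => ((hv.hasDerivAt_sq t).sub (hφ t)).congr_deriv (by ring))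
    (fun t ht => ((hv.hasDerivAt_mul_deriv (hl.trans ht.1)).const_mul 2).sub (hφ' t))
    (fun t ht hpos => by
      nlinarith [hforb t ht, sq_nonneg (deriv v t), sq_nonneg (v t), pow_pos hd 2])
    (by linarith) (by rcases hleft with h | h <;> [left; right] <;> linarith) t ht
  linarith

theorem sq_le_mul_exp_of_forbidden_Ici (hv : IsFiberEigenfun η lam v) {B d x₀ : ℝ} (hd : 0 < d)
    (hx₀ : 0 ≤ x₀) (hB : ∀ t, 0 ≤ t → v t ^ 2 ≤ B)
    (hforb : ∀ t, x₀ ≤ t → lam + d ^ 2 ≤ (η - t) ^ 2) {x : ℝ} (hx : 0 ≤ x) :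
    v x ^ 2 ≤ B * exp (-d * (x - x₀)) := by
  have hB₀ : 0 ≤ B := (sq_nonneg _).trans (hB 0 le_rfl)
  rcases lt_or_ge x x₀ with hxx₀ | hxx₀
  · exact (hB x hx).trans (le_mul_of_one_le_right hB₀ (one_le_exp (by nlinarith)))
  have hφ : ∀ T t, B * exp (-d * T) * exp (d * t) + B * exp (d * x₀) * exp (-d * t)
      = B * exp (-d * (t - x₀)) + B * exp (d * (t - T)) := fun T t => by
    simp only [mul_assoc, ← exp_add]; ring_nf
  -- compare on `[x₀, T]` and let `T → ∞`
  have hT : ∀ T, x ≤ T → v x ^ 2 ≤ B * exp (-d * (x - x₀)) + B * exp (d * (x - T)) := by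
    intro T hxT
    have hr : v T ^ 2 ≤ B * exp (-d * (T - x₀)) + B * exp (d * (T - T)) := by
      rw [sub_self, mul_zero, exp_zero]
      nlinarith [hB T (hx.trans hxT), exp_pos (-d * (T - x₀))]
    have hl : v x₀ ^ 2 ≤ B * exp (-d * (x₀ - x₀)) + B * exp (d * (x₀ - T)) := by
      rw [sub_self, mul_zero, exp_zero]
      nlinarith [hB x₀ hx₀, exp_pos (d * (x₀ - T))]
    have := hv.sq_le_of_forbidden hx₀ hd (fun t ht => hforb t ht.1)
      (by rwa [hφ]) (Or.inl (by rwa [hφ])) x ⟨hxx₀, hxT⟩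
    rwa [hφ] at this
  have hlim : Tendsto (fun T => B * exp (-d * (x - x₀)) + B * exp (d * (x - T))) atTop
      (𝓝 (B * exp (-d * (x - x₀)) + B * 0)) := by
    refine tendsto_const_nhds.add (tendsto_const_nhds.mul (tendsto_exp_atBot.comp ?_))
    simpa only [sub_eq_add_neg] using
      (tendsto_atBot_add_const_left _ x tendsto_neg_atTop_atBot).const_mul_atBot hd
  simpa using ge_of_tendsto hlim (eventually_atTop.2 ⟨x, hT⟩)

theorem sq_le_two_mul_exp_of_forbidden_Icc (hv : IsFiberEigenfun η lam v)
    (hbc : v 0 * deriv v 0 = 0) {B d x₁ : ℝ} (hd : 0 < d) (hB : ∀ t, 0 ≤ t → v t ^ 2 ≤ B)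
    (hforb : ∀ t, 0 ≤ t → t ≤ x₁ → lam + d ^ 2 ≤ (η - t) ^ 2) {x : ℝ} (hx : 0 ≤ x) :
    v x ^ 2 ≤ 2 * B * exp (-d * (x₁ - x)) := by
  have hB₀ : 0 ≤ B := (sq_nonneg _).trans (hB 0 le_rfl)
  rcases lt_or_ge x₁ x with hx₁x | hxx₁
  · nlinarith [hB x hx, one_le_exp (by nlinarith : 0 ≤ -d * (x₁ - x))]
  -- compare on `[0, x₁]` with `2 B e^{-d x₁} cosh (d t)`, whose derivative vanishes at `0`
  have hφ : ∀ t, B * exp (-d * x₁) * exp (d * t) + B * exp (-d * x₁) * exp (-d * t)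
      = B * exp (-d * (x₁ - t)) + B * exp (-d * (x₁ + t)) := fun t => by
    simp only [mul_assoc, ← exp_add]; ring_nf
  have hr : v x₁ ^ 2 ≤ B * exp (-d * (x₁ - x₁)) + B * exp (-d * (x₁ + x₁)) := by
    rw [sub_self, mul_zero, exp_zero]
    nlinarith [hB x₁ (hx.trans hxx₁), exp_pos (-d * (x₁ + x₁))]
  have hl : d * (B * exp (-d * x₁)) * exp (d * 0) - d * (B * exp (-d * x₁)) * exp (-d * 0)
      ≤ 2 * (v 0 * deriv v 0) := by simp [hbc]
  have := hv.sq_le_of_forbidden le_rfl hd (fun t ht => hforb t ht.1 ht.2) (by rwa [hφ])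
    (Or.inr hl) x ⟨hx, hxx₁⟩
  rw [hφ] at this
  nlinarith [exp_le_exp.2 (by nlinarith : -d * (x₁ + x) ≤ -d * (x₁ - x))]

theorem le_of_forbidden_Ici (hv : IsFiberEigenfun η lam v) {B d : ℝ} (hd : 0 < d)
    (hB : ∀ t, 0 ≤ t → v t ^ 2 ≤ B) (hforb : ∀ t, 0 ≤ t → lam + d ^ 2 ≤ (η - t) ^ 2) :
    d ≤ B := by
  have hdecay : ∀ t ∈ Ioi (0 : ℝ), v t ^ 2 ≤ B * exp (-d * t) := fun t ht => by
    simpa using hv.sq_le_mul_exp_of_forbidden_Ici hd le_rfl hB hforb (le_of_lt ht)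
  have := setIntegral_mono_on hv.2.2.1 ((integrableOn_exp_mul_Ioi (by linarith) 0).const_mul B)
    measurableSet_Ioi hdecay
  rwa [hv.2.2.2, integral_const_mul, integral_exp_mul_Ioi (by linarith), mul_zero, exp_zero,
    neg_div_neg_eq, mul_one_div, le_div_iff₀ hd, one_mul] at this

theorem exists_sq_le_mul_exp_neg_abs_sub (c : ℝ) :
    ∃ A, ∀ {η lam : ℝ} {v : ℝ → ℝ}, IsFiberEigenfun η lam v → v 0 * deriv v 0 = 0 → lam ≤ c →
      ∀ x, 0 ≤ x → v x ^ 2 ≤ A * exp (-|x - η|) := by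
  set B := max c 0 + 2 with hB_def
  set a := √(max c 0) + 1 with ha_def
  set K := a + B with hK_def
  have hB₀ : 0 < B := by positivity
  have ha₀ : 0 < a := by positivity
  refine ⟨2 * B * exp (a + K), fun {η lam v} hv hbc hlam x hx => ?_⟩
  have hB : ∀ t, 0 ≤ t → v t ^ 2 ≤ B := fun t ht =>
    (hv.sq_le_max_add_two hbc ht).trans (by rw [hB_def]; gcongr)
  have hforb : ∀ d, 0 ≤ d → ∀ t, √(max c 0) + d ≤ |η - t| → lam + d ^ 2 ≤ (η - t) ^ 2 :=
    fun d hd t => add_sq_le_sq_of_add_le_abs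
      (by rw [sq_sqrt (le_max_right _ _)]; exact hlam.trans (le_max_left _ _)) (sqrt_nonneg _) hd
  -- otherwise the whole half-line is forbidden, with rate `B + 1`
  have hη : -K ≤ η := by
    by_contra! hη
    have := hv.le_of_forbidden_Ici (d := B + 1) (by positivity) hB fun t ht =>
      hforb _ (by positivity) t (by rw [abs_of_neg (by linarith)]; linarith)
    linarith
  rcases le_total x η with hxη | hηx
  · have := hv.sq_le_two_mul_exp_of_forbidden_Icc hbc one_pos hB (x₁ := η - a)
      (fun t _ ht => hforb 1 zero_le_one t (by rw [abs_of_nonneg (by linarith)]; linarith)) hx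
    rw [abs_of_nonpos (by linarith), mul_assoc, ← exp_add]
    refine this.trans (mul_le_mul_of_nonneg_left (exp_le_exp.2 ?_) (by positivity))
    linarith
  · have := hv.sq_le_mul_exp_of_forbidden_Ici one_pos (x₀ := η + a + K) (by linarith) hB
      (fun t ht => hforb 1 zero_le_one t (by rw [abs_of_nonpos (by linarith)]; linarith)) hx
    rw [abs_of_nonneg (by linarith), mul_assoc, ← exp_add]
    refine this.trans ?_
    nlinarith [exp_le_exp.2 (by linarith : -1 * (x - (η + a + K)) ≤ a + K + -(x - η)),
      exp_pos (a + K + -(x - η))]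

end IsFiberEigenfun

/-- pointwise decay of half-line oscillator eigenfunctions away from
the turning region: for each `n`, `s` and each bound `C` on the eigenvalue there is a
constant `C'` such that whenever `|x - η| ≥ ε(x + |η|)` one has
`|u_n(x,η)| ≤ C'(1 + x + |η|)^{-s}`. -/
theorem eigenfunction_decay_away_from_turning_region
    (lam : ℕ → ℝ → ℝ) (u : ℕ → ℝ → ℝ → ℝ)
    (hu : ∀ (n : ℕ) (η : ℝ), IsFiberEigenfun η (lam n η) (u n η))
    (hbc : (∀ (n : ℕ) (η : ℝ), u n η 0 = 0) ∨ (∀ (n : ℕ) (η : ℝ), deriv (u n η) 0 = 0))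
    (n : ℕ) (s C ε : ℝ) (hε : 0 < ε) :
    ∃ C' : ℝ, ∀ η x : ℝ, lam n η ≤ C → 0 ≤ x → ε * (x + |η|) ≤ |x - η| →
      |u n η x| ≤ C' * (1 + x + |η|) ^ (-s) := by
  obtain ⟨A, hA⟩ := IsFiberEigenfun.exists_sq_le_mul_exp_neg_abs_sub C
  obtain ⟨K, hK⟩ := exists_exp_neg_mul_le_mul_one_add_rpow_neg (half_pos hε) s
  refine ⟨√A * K, fun η x hlam hx hsep => ?_⟩
  have hbc' : u n η 0 * deriv (u n η) 0 = 0 := by rcases hbc with h | h <;> simp [h]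
  have hAgmon := hA (hu n η) hbc' hlam x hx
  have hA₀ : 0 ≤ A := nonneg_of_mul_nonneg_left ((sq_nonneg _).trans hAgmon) (exp_pos _)
  have hsq : u n η x ^ 2 ≤ A * exp (-(ε / 2 * (x + |η|))) ^ 2 := by
    refine hAgmon.trans ?_
    rw [← exp_nat_mul]
    gcongr
    push_cast
    linarith
  calc |u n η x| ≤ √(A * exp (-(ε / 2 * (x + |η|))) ^ 2) := abs_le_sqrt hsq
    _ = √A * exp (-(ε / 2 * (x + |η|))) := by
      rw [sqrt_mul' _ (by positivity), sqrt_sq (by positivity)]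
    _ ≤ √A * (K * (1 + (x + |η|)) ^ (-s)) := by gcongr; exact hK _ (by positivity)
    _ = √A * K * (1 + x + |η|) ^ (-s) := by rw [add_assoc, mul_assoc]
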